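/- Let a, b, c, d be nonnegative integers with b, d positive, gcd(a,b) = 1, gcd(c,d) = 1, and D = bc − ad > 0. Then there exists a positive integer v with gcd(D, v) = 1 such that the tree T(a/b, c/d) is equivalent to the tree T(0/1, D/v). -/

import Mathlib

/-- The mediant of two rationals `p` and `q`: `(num p + num q) / (den p + den q)`. -/
def mediant (p q : ℚ) : ℚ := ((p.num + q.num : ℤ) : ℚ) / ((p.den + q.den : ℕ) : ℚ)

/-- Insert between every pair of consecutive entries of a list their mediant. -/
def insertMediants : List ℚ → List ℚ
  | [] => []
  | [p] => [p]
  | p :: q :: rest => p :: mediant p q :: insertMediants (q :: rest)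

/-- The sequences of the tree `T(r, s)`: `S r s 0 = [r, s]`, and each successive
sequence is obtained by inserting mediants between consecutive entries. -/
def S (r s : ℚ) : ℕ → List ℚ
  | 0 => [r, s]
  | n + 1 => insertMediants (S r s n)


/-- Two trees `T(r1, s1)` and `T(r2, s2)` are equivalent if the mediant inserted at each
position reduces by exactly the same factor in both trees: for every row `n` and every
`j`-th consecutive pair `(p, q)` of `S r1 s1 n` and `(p', q')` of `S r2 s2 n`,
`gcd (num p + num q) (den p + den q) = gcd (num p' + num q') (den p' + den q')`. -/
def TreesEquiv (r1 s1 r2 s2 : ℚ) : Prop :=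
  ∀ n j, (h1 : j + 1 < (S r1 s1 n).length) → (h2 : j + 1 < (S r2 s2 n).length) →
    Int.gcd ((S r1 s1 n)[j].num + (S r1 s1 n)[j + 1].num)
            (((S r1 s1 n)[j].den : ℤ) + ((S r1 s1 n)[j + 1].den : ℤ)) =
    Int.gcd ((S r2 s2 n)[j].num + (S r2 s2 n)[j + 1].num)
            (((S r2 s2 n)[j].den : ℤ) + ((S r2 s2 n)[j + 1].den : ℤ))

/-!
The integer matrix `M = !![b, -a; r, s]` with `a r + b s = 1` is unimodular, so acting on
numerator–denominator pairs it preserves gcds. A mediant is the sum of two such pairs divided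
by their gcd; hence `M` maps `T(a/b, c/d)` entrywise onto the tree with ends `M (a, b) = (0, 1)`
and `M (c, d) = (D, r c + s d)`, and the reduction factors of the two trees agree. Among the
Bézout pairs `(r, s)` one can choose one with `v = r c + s d > 0`, and then
`gcd (D, v) = gcd (c, d) = 1`.
-/

theorem Int.gcd_unimodular {a b r s : ℤ} (h : a * r + b * s = 1) (X Y : ℤ) :
    Int.gcd (b * X - a * Y) (r * X + s * Y) = Int.gcd X Y := by
  have hdvd' := (Int.gcd_dvd_left (b * X - a * Y) (r * X + s * Y)).linear_comb
    (Int.gcd_dvd_right (b * X - a * Y) (r * X + s * Y))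
  have hdvd := (Int.gcd_dvd_left X Y).linear_comb (Int.gcd_dvd_right X Y)
  apply Nat.dvd_antisymm <;> rw [← Int.natCast_dvd_natCast] <;> apply Int.dvd_coe_gcd
  · exact (hdvd' s a).trans (dvd_of_eq (by linear_combination X * h))
  · exact (hdvd' (-r) b).trans (dvd_of_eq (by linear_combination Y * h))
  · exact (hdvd b (-a)).trans (dvd_of_eq (by ring))
  · exact hdvd r s

theorem exists_bezout_pos {a b c d : ℤ} (hab : IsCoprime a b) (hD : 0 < b * c - a * d) :
    ∃ r s : ℤ, a * r + b * s = 1 ∧ 0 < r * c + s * d := by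
  obtain ⟨r₀, s₀, h₀⟩ := hab
  -- shifting the Bézout pair by `k (b, -a)` shifts `r c + s d` by `k D`
  set w := r₀ * c + s₀ * d
  refine ⟨r₀ + (|w| + 1) * b, s₀ - (|w| + 1) * a, by linear_combination h₀, ?_⟩
  have hshift : (r₀ + (|w| + 1) * b) * c + (s₀ - (|w| + 1) * a) * d
      = w + (|w| + 1) * (b * c - a * d) := by ring
  rw [hshift]
  nlinarith [neg_abs_le w, abs_nonneg w]

section Unimodular

variable {a b r s : ℤ}

def NumDenImage (a b r s : ℤ) (p p' : ℚ) : Prop :=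
  p'.num = b * p.num - a * p.den ∧ (p'.den : ℤ) = r * p.num + s * p.den

theorem numDenImage_div (h : a * r + b * s = 1) {X Y : ℤ} (hY : 0 < Y)
    (hY' : 0 < r * X + s * Y) :
    NumDenImage a b r s (X / Y) ((b * X - a * Y : ℤ) / (r * X + s * Y : ℤ)) := by
  set q : ℚ := X / Y
  obtain ⟨c, hX, hYc⟩ := Rat.num_den_mk (q := q) hY.ne' (Rat.intCast_div_eq_divInt X Y)
  have hc : 0 < c := (pos_iff_pos_of_mul_pos (hYc ▸ hY)).2 (mod_cast q.den_pos)
  set N := b * q.num - a * q.den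
  set M := r * q.num + s * q.den
  have hN : b * X - a * Y = c * N := by linear_combination b * hX - a * hYc
  have hM : r * X + s * Y = c * M := by linear_combination r * hX + s * hYc
  have hMpos : 0 < M := pos_of_mul_pos_right (hM ▸ hY') hc.le
  have hcop : Int.gcd N M = 1 := by rw [Int.gcd_unimodular h]; exact q.reduced
  rw [hN, hM, Int.cast_mul, Int.cast_mul, mul_div_mul_left _ _ (by exact_mod_cast hc.ne')]
  exact ⟨Rat.num_div_eq_of_coprime hMpos hcop, Rat.den_div_eq_of_coprime hMpos hcop⟩

variable {p q p' q' : ℚ}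

theorem NumDenImage.gcd_add (h : a * r + b * s = 1) (hp : NumDenImage a b r s p p')
    (hq : NumDenImage a b r s q q') :
    Int.gcd (p.num + q.num) ((p.den : ℤ) + (q.den : ℤ)) =
      Int.gcd (p'.num + q'.num) ((p'.den : ℤ) + (q'.den : ℤ)) := by
  rw [hp.1, hp.2, hq.1, hq.2]
  convert (Int.gcd_unimodular h _ _).symm using 2 <;> ring

theorem NumDenImage.mediant (h : a * r + b * s = 1) (hp : NumDenImage a b r s p p')
    (hq : NumDenImage a b r s q q') :
    NumDenImage a b r s (mediant p q) (mediant p' q') := by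
  have hmed (x y : ℚ) :
      _root_.mediant x y = ((x.num + y.num : ℤ) : ℚ) / (((x.den : ℤ) + y.den : ℤ) : ℚ) := by
    simp [_root_.mediant]
  have hX' : p'.num + q'.num = b * (p.num + q.num) - a * ((p.den : ℤ) + q.den) := by
    rw [hp.1, hq.1]; ring
  have hY' : (p'.den : ℤ) + q'.den = r * (p.num + q.num) + s * ((p.den : ℤ) + q.den) := by
    rw [hp.2, hq.2]; ring
  rw [hmed, hmed, hX', hY']
  exact numDenImage_div h (by positivity) (hY' ▸ by positivity)

end Unimodular

section Relation

variable {R : ℚ → ℚ → Prop}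

theorem List.Forall₂.insertMediants
    (hR : ∀ {p q p' q'}, R p p' → R q q' → R (mediant p q) (mediant p' q'))
    {L L' : List ℚ} (hL : List.Forall₂ R L L') :
    List.Forall₂ R (insertMediants L) (insertMediants L') := by
  induction hL with
  | nil => exact .nil
  | cons hp hL ih =>
    cases hL with
    | nil => exact .cons hp .nil
    | cons hq _ => exact .cons hp (.cons (hR hp hq) ih)

theorem forall₂_S (hR : ∀ {p q p' q'}, R p p' → R q q' → R (mediant p q) (mediant p' q'))
    {r₁ s₁ r₂ s₂ : ℚ} (hr : R r₁ r₂) (hs : R s₁ s₂) (n : ℕ) :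
    List.Forall₂ R (S r₁ s₁ n) (S r₂ s₂ n) := by
  induction n with
  | zero => exact .cons hr (.cons hs .nil)
  | succ n ih => exact ih.insertMediants hR

theorem treesEquiv_of_forall₂
    (hR : ∀ {p q p' q'}, R p p' → R q q' → R (mediant p q) (mediant p' q'))
    (hgcd : ∀ {p q p' q'}, R p p' → R q q' →
      Int.gcd (p.num + q.num) ((p.den : ℤ) + (q.den : ℤ)) =
        Int.gcd (p'.num + q'.num) ((p'.den : ℤ) + (q'.den : ℤ)))
    {r₁ s₁ r₂ s₂ : ℚ} (hr : R r₁ r₂) (hs : R s₁ s₂) : TreesEquiv r₁ s₁ r₂ s₂ := by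
  intro n j h₁ h₂
  obtain ⟨-, hget⟩ := List.forall₂_iff_get.1 (forall₂_S hR hr hs n)
  exact hgcd (hget j (by omega) (by omega)) (hget (j + 1) h₁ h₂)

end Relation

/-- For any tree `T(a/b, c/d)` with cross-determinant `D = bc - ad > 0`, there is a
positive integer `v` coprime to `D` such that `T(a/b, c/d)` is equivalent to
`T(0/1, D/v)`. -/
theorem exists_equiv_tree_zero_D_v (a b c d : ℕ) (hb : 0 < b) (hd : 0 < d)
    (hab : Nat.gcd a b = 1) (hcd : Nat.gcd c d = 1) (hD : a * d < b * c) :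
    ∃ v : ℕ, 0 < v ∧ Nat.gcd (b * c - a * d) v = 1 ∧
      TreesEquiv ((a : ℚ) / b) ((c : ℚ) / d) 0 (((b * c - a * d : ℕ) : ℚ) / v) := by
  have hDcast : ((b * c - a * d : ℕ) : ℤ) = b * c - a * d := by push_cast [hD.le]; ring
  obtain ⟨r, s, hrs, hv⟩ := exists_bezout_pos (Nat.isCoprime_iff_coprime.2 hab)
    (by rw [← hDcast]; omega : (0 : ℤ) < b * c - a * d)
  have hvcast : (((r * c + s * d).toNat : ℕ) : ℤ) = r * c + s * d := Int.toNat_of_nonneg hv.le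
  refine ⟨(r * c + s * d).toNat, by omega, ?_, ?_⟩
  · rw [← Int.gcd_natCast_natCast, hDcast, hvcast, Int.gcd_unimodular hrs,
      Int.gcd_natCast_natCast, hcd]
  · refine treesEquiv_of_forall₂ (R := NumDenImage a b r s) (fun hp hq => hp.mediant hrs hq)
      (fun hp hq => hp.gcd_add hrs hq) ?_ ?_
    · convert numDenImage_div hrs (X := a) (Y := b) (by omega) (by linarith) using 1
      · push_cast; rfl
      · rw [show (b : ℤ) * a - a * b = 0 by ring]; simp
    · convert numDenImage_div hrs (X := c) (Y := d) (by omega) hv using 1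
      · push_cast; rfl
      · rw [← hDcast, ← hvcast]; push_cast; rfl
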